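/- arXiv:2211.09506 — 2 statements merged into one kernel-verified Lean document; each statement's English description precedes it below -/
import Mathlib

section
/- Scalar version of the P₂ resolvent equation: let t, s, p be quaternions with s, p in the S-resolvent set of t (i.e. s² - 2Re(t)s + |t|² and p² - 2Re(t)p + |t|² are nonzero) and s ∉ [p]. Then S_R^{-1}(s,t) P₂^L(p,t) + P₂^R(s,t) S_L^{-1}(p,t) - 4 Q_{c,s}(t)^{-1} t̲ Q_{c,p}(t)^{-1} = [ (P₂^R(s,t) - P₂^L(p,t)) p - s̄ (P₂^R(s,t) - P₂^L(p,t)) ] (p² - 2Re(s)p + |s|²)^{-1}, where t̲ is the imaginary part of t. -/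
open scoped Quaternion

/-- The 2-sphere `[p]` of a quaternion `p`. -/
def qSphere (p : ℍ[ℝ]) : Set ℍ[ℝ] := {x | x.re = p.re ∧ ‖x.im‖ = ‖p.im‖}

/-- `Q_{c,s}(t) = s² - 2 Re(t) s + |t|²`. -/
noncomputable def Qc (s t : ℍ[ℝ]) : ℍ[ℝ] :=
  s ^ 2 - 2 * ((t.re : ℝ) : ℍ[ℝ]) * s + ((Quaternion.normSq t : ℝ) : ℍ[ℝ])

/-- `S_L^{-1}(p,t) = (p - t̄) Q_{c,p}(t)^{-1}`. -/
noncomputable def SL (p t : ℍ[ℝ]) : ℍ[ℝ] := (p - star t) * (Qc p t)⁻¹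

/-- `S_R^{-1}(s,t) = Q_{c,s}(t)^{-1} (s - t̄)`. -/
noncomputable def SR (s t : ℍ[ℝ]) : ℍ[ℝ] := (Qc s t)⁻¹ * (s - star t)

/-- `F_L(p,t) = -4 (p - t̄) Q_{c,p}(t)^{-2}`. -/
noncomputable def FL (p t : ℍ[ℝ]) : ℍ[ℝ] := -4 * (p - star t) * ((Qc p t)⁻¹) ^ 2

/-- `F_R(s,t) = -4 Q_{c,s}(t)^{-2} (s - t̄)`. -/
noncomputable def FR (s t : ℍ[ℝ]) : ℍ[ℝ] := -4 * ((Qc s t)⁻¹) ^ 2 * (s - star t)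

/-- `P₂^L(p,t) = -F_L(p,t) p + t₀ F_L(p,t)`. -/
noncomputable def P2L (p t : ℍ[ℝ]) : ℍ[ℝ] :=
  -(FL p t * p) + ((t.re : ℝ) : ℍ[ℝ]) * FL p t

/-- `P₂^R(s,t) = -s F_R(s,t) + t₀ F_R(s,t)`. -/
noncomputable def P2R (s t : ℍ[ℝ]) : ℍ[ℝ] :=
  -(s * FR s t) + ((t.re : ℝ) : ℍ[ℝ]) * FR s t

open Quaternion

/-!
Everything rests on `(x - t̄) x = Q_{c,x}(t) + t (x - t̄)`, its mirror image, and the fact that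
`Q_{c,x}(t)` commutes with `x`. These give left resolvent relations `K p = t K + (…)` for
`S_L^{-1}(p,t)`, `F_L(p,t)`, `P₂^L(p,t)` and right ones `s K = K t + (…)` for their right
counterparts. Combining them, the left-hand side `X` solves the Sylvester equation
`X p - s X = Δ` with `Δ = P₂^R(s,t) - P₂^L(p,t)`. Since `s + s̄` and `s̄ s` are real, this forces
`X (p² - 2Re(s) p + |s|²) = Δ p - s̄ Δ`, and the factor `p² - 2Re(s) p + |s|²` is invertible
because all its quaternionic roots lie on the sphere `[s]`.
-/

theorem mul_sq_sub_mul_add_eq_of_mul_eq_mul_add {R : Type*} [Ring R] {X Δ s s' p : R}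
    (hXp : X * p = s * X + Δ) (hsum : Commute (s + s') X) (hprod : Commute (s' * s) X) :
    X * (p ^ 2 - (s + s') * p + s' * s) = Δ * p - s' * Δ := by
  calc X * (p ^ 2 - (s + s') * p + s' * s)
      = X * p * p - (s + s') * (X * p) + s' * s * X := by
        rw [← mul_assoc (s + s'), hsum.eq, hprod.eq]; noncomm_ring
    _ = (s * X + Δ) * p - (s + s') * (s * X + Δ) + s' * s * X := by rw [hXp]
    _ = s * (X * p) + Δ * p - (s + s') * (s * X + Δ) + s' * s * X := by noncomm_ring
    _ = Δ * p - s' * Δ := by rw [hXp]; noncomm_ring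

theorem Qc_eq (x t : ℍ[ℝ]) : Qc x t = x ^ 2 - (t + star t) * x + star t * t := by
  rw [Qc, self_add_star, Quaternion.star_mul_self]

theorem commute_self_Qc (x t : ℍ[ℝ]) : Commute x (Qc x t) := by
  have hre (r : ℝ) : Commute x r := (coe_commute r x).symm
  exact ((Commute.self_pow x 2).sub_right
    (((Commute.ofNat_right x 2).mul_right (hre _)).mul_right (Commute.refl x))).add_right (hre _)

theorem sub_star_mul_self (x t : ℍ[ℝ]) : (x - star t) * x = Qc x t + t * (x - star t) := by
  rw [Qc_eq, star_comm_self' t]; noncomm_ring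

theorem self_mul_sub_star (x t : ℍ[ℝ]) : x * (x - star t) = Qc x t + (x - star t) * t := by
  have h : (t + star t) * x = x * (t + star t) := by
    rw [self_add_star']; exact coe_commutes _ x
  rw [Qc_eq]; noncomm_ring [h]

theorem star_eq_re_sub_im (t : ℍ[ℝ]) : star t = t.re - t.im := by
  ext <;> simp

theorem SL_mul_self {p t : ℍ[ℝ]} (hp : Qc p t ≠ 0) : SL p t * p = 1 + t * SL p t := by
  rw [SL, mul_assoc, ← (commute_self_Qc p t).inv_right₀.eq, ← mul_assoc, sub_star_mul_self,
    add_mul, mul_inv_cancel₀ hp, mul_assoc]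

theorem self_mul_SR {s t : ℍ[ℝ]} (hs : Qc s t ≠ 0) : s * SR s t = 1 + SR s t * t := by
  rw [SR, ← mul_assoc, (commute_self_Qc s t).inv_right₀.eq, mul_assoc, self_mul_sub_star,
    mul_add, inv_mul_cancel₀ hs, mul_assoc]

theorem FL_eq (p t : ℍ[ℝ]) : FL p t = -4 * (SL p t * (Qc p t)⁻¹) := by
  rw [FL, SL]; noncomm_ring

theorem FR_eq (s t : ℍ[ℝ]) : FR s t = -4 * ((Qc s t)⁻¹ * SR s t) := by
  rw [FR, SR]; noncomm_ring

theorem FL_mul_self {p t : ℍ[ℝ]} (hp : Qc p t ≠ 0) :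
    FL p t * p = t * FL p t - 4 * (Qc p t)⁻¹ := by
  calc FL p t * p = -4 * (SL p t * ((Qc p t)⁻¹ * p)) := by rw [FL_eq]; noncomm_ring
    _ = -4 * ((1 + t * SL p t) * (Qc p t)⁻¹) := by
      rw [← (commute_self_Qc p t).inv_right₀.eq, ← mul_assoc (SL p t), SL_mul_self hp]
    _ = t * FL p t - 4 * (Qc p t)⁻¹ := by rw [FL_eq]; noncomm_ring

theorem self_mul_FR {s t : ℍ[ℝ]} (hs : Qc s t ≠ 0) :
    s * FR s t = FR s t * t - 4 * (Qc s t)⁻¹ := by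
  calc s * FR s t = -4 * (s * (Qc s t)⁻¹ * SR s t) := by rw [FR_eq]; noncomm_ring
    _ = -4 * ((Qc s t)⁻¹ * (1 + SR s t * t)) := by
      rw [(commute_self_Qc s t).inv_right₀.eq, mul_assoc, self_mul_SR hs]
    _ = FR s t * t - 4 * (Qc s t)⁻¹ := by rw [FR_eq]; noncomm_ring

theorem P2L_eq (p t : ℍ[ℝ]) : P2L p t = -(FL p t * (p - t.re)) := by
  rw [P2L, coe_commutes]; noncomm_ring

theorem P2R_eq (s t : ℍ[ℝ]) : P2R s t = -((s - t.re) * FR s t) := by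
  rw [P2R]; noncomm_ring

theorem P2L_mul_self {p t : ℍ[ℝ]} (hp : Qc p t ≠ 0) :
    P2L p t * p = t * P2L p t + 4 * ((p - t.re) * (Qc p t)⁻¹) := by
  have hpp : Commute (p - t.re) p := (Commute.refl p).sub_left (coe_commute _ p)
  have hpQ : Commute (p - t.re) (Qc p t)⁻¹ :=
    (commute_self_Qc p t).inv_right₀.sub_left (coe_commute _ _)
  calc P2L p t * p = -(FL p t * p * (p - t.re)) := by
        rw [P2L_eq, neg_mul, mul_assoc, hpp.eq, ← mul_assoc]
    _ = -((t * FL p t - 4 * (Qc p t)⁻¹) * (p - t.re)) := by rw [FL_mul_self hp]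
    _ = t * -(FL p t * (p - t.re)) + 4 * ((Qc p t)⁻¹ * (p - t.re)) := by noncomm_ring
    _ = t * P2L p t + 4 * ((p - t.re) * (Qc p t)⁻¹) := by rw [← P2L_eq, hpQ.eq]

theorem self_mul_P2R {s t : ℍ[ℝ]} (hs : Qc s t ≠ 0) :
    s * P2R s t = P2R s t * t + 4 * ((Qc s t)⁻¹ * (s - t.re)) := by
  have hss : Commute s (s - t.re) := (Commute.refl s).sub_right (coe_commute _ s).symm
  have hsQ : Commute (s - t.re) (Qc s t)⁻¹ :=
    (commute_self_Qc s t).inv_right₀.sub_left (coe_commute _ _)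
  calc s * P2R s t = -((s - t.re) * (s * FR s t)) := by
        rw [P2R_eq, mul_neg, ← mul_assoc, hss.eq, mul_assoc]
    _ = -((s - t.re) * (FR s t * t - 4 * (Qc s t)⁻¹)) := by rw [self_mul_FR hs]
    _ = -((s - t.re) * FR s t) * t + 4 * ((s - t.re) * (Qc s t)⁻¹) := by noncomm_ring
    _ = P2R s t * t + 4 * ((Qc s t)⁻¹ * (s - t.re)) := by rw [← P2R_eq, hsQ.eq]

noncomputable def P2ResolventLhs (s p t : ℍ[ℝ]) : ℍ[ℝ] :=
  SR s t * P2L p t + P2R s t * SL p t - 4 * ((Qc s t)⁻¹ * t.im * (Qc p t)⁻¹)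

theorem P2ResolventLhs_mul_self {s p t : ℍ[ℝ]} (hs : Qc s t ≠ 0) (hp : Qc p t ≠ 0) :
    P2ResolventLhs s p t * p = s * P2ResolventLhs s p t + (P2R s t - P2L p t) := by
  have hSR : SR s t * t = s * SR s t - 1 := eq_sub_of_add_eq' (self_mul_SR hs).symm
  have hP2R : P2R s t * t = s * P2R s t - 4 * ((Qc s t)⁻¹ * (s - t.re)) :=
    eq_sub_of_add_eq (self_mul_P2R hs).symm
  have hcross :
      (s - star t) * (p - t.re) - (s - t.re) * (p - star t) - t.im * p = -(s * t.im) := by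
    rw [star_eq_re_sub_im]; noncomm_ring [coe_commutes t.re t.im]
  unfold P2ResolventLhs
  calc (SR s t * P2L p t + P2R s t * SL p t - 4 * ((Qc s t)⁻¹ * t.im * (Qc p t)⁻¹)) * p
      = SR s t * (P2L p t * p) + P2R s t * (SL p t * p) -
          4 * ((Qc s t)⁻¹ * t.im * (p * (Qc p t)⁻¹)) := by
        rw [(commute_self_Qc p t).inv_right₀.eq]; noncomm_ring
    _ = SR s t * t * P2L p t + P2R s t * t * SL p t + P2R s t +
          4 * (SR s t * (p - t.re) * (Qc p t)⁻¹ - (Qc s t)⁻¹ * t.im * p * (Qc p t)⁻¹) := by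
        rw [P2L_mul_self hp, SL_mul_self hp]; noncomm_ring
    _ = s * (SR s t * P2L p t + P2R s t * SL p t) + (P2R s t - P2L p t) +
          4 * ((Qc s t)⁻¹ * ((s - star t) * (p - t.re) - (s - t.re) * (p - star t) - t.im * p) *
            (Qc p t)⁻¹) := by
        rw [hSR, hP2R, SR, SL]; noncomm_ring
    _ = s * (SR s t * P2L p t + P2R s t * SL p t - 4 * ((Qc s t)⁻¹ * t.im * (Qc p t)⁻¹)) +
          (P2R s t - P2L p t) := by
        rw [hcross, mul_neg, ← mul_assoc _ s, ← (commute_self_Qc s t).inv_right₀.eq]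
        noncomm_ring

theorem mem_qSphere_of_Qc_eq_zero {p s : ℍ[ℝ]} (h : Qc p s = 0) : s ∈ qSphere p := by
  rw [Qc_eq, self_add_star', Quaternion.star_mul_self] at h
  obtain ⟨h0, h1, h2, h3⟩ := Quaternion.ext_iff.mp h
  simp only [pow_two, normSq_def', re_add, re_sub, re_mul, re_coe, imI_coe, imJ_coe,
    imK_coe, imI_add, imI_sub, imI_mul, imJ_add, imJ_sub, imJ_mul, imK_add, imK_sub, imK_mul,
    re_zero, imI_zero, imJ_zero, imK_zero, coe_mul, coe_add, mul_zero, zero_mul, sub_zero,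
    add_zero, sub_self] at h0 h1 h2 h3
  -- `h1, h2, h3` say `(p₀ - s₀) p.im = 0` and `h0` says `(p₀ - s₀)² + |s.im|² = |p.im|²`.
  have hre : p.re = s.re := by
    set u := p.re - s.re
    have hu4 : u ^ 2 * (u ^ 2 + (s.imI ^ 2 + s.imJ ^ 2 + s.imK ^ 2)) = 0 := by
      linear_combination u ^ 2 * h0 + (u * p.imI / 2) * h1 + (u * p.imJ / 2) * h2 +
        (u * p.imK / 2) * h3
    have hu : u ^ 2 = 0 := by
      rcases mul_eq_zero.mp hu4 with hu | hsum
      · exact hu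
      · nlinarith [sq_nonneg u, sq_nonneg s.imI, sq_nonneg s.imJ, sq_nonneg s.imK]
    linear_combination pow_eq_zero_iff two_ne_zero |>.mp hu
  have hnorm (x : ℍ[ℝ]) : ‖x.im‖ ^ 2 = x.imI ^ 2 + x.imJ ^ 2 + x.imK ^ 2 := by
    rw [sq, ← normSq_eq_norm_mul_self, normSq_def']; simp
  refine ⟨hre.symm, (sq_eq_sq₀ (norm_nonneg _) (norm_nonneg _)).mp ?_⟩
  rw [hnorm, hnorm]
  linear_combination h0 - (p.re - s.re) * hre

/-- Scalar version of the `P₂` resolvent equation: for quaternions `t, s, p` with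
`s, p` in the `S`-resolvent set of `t` and `s ∉ [p]`,
`S_R^{-1}(s,t) P₂^L(p,t) + P₂^R(s,t) S_L^{-1}(p,t) - 4 Q_{c,s}(t)^{-1} t̲ Q_{c,p}(t)^{-1}
= [(P₂^R(s,t) - P₂^L(p,t)) p - s̄ (P₂^R(s,t) - P₂^L(p,t))] (p² - 2Re(s)p + |s|²)^{-1}`. -/
theorem P2_resolvent_equation (t s p : ℍ[ℝ])
    (hs : Qc s t ≠ 0) (hp : Qc p t ≠ 0) (hsp : s ∉ qSphere p) :
    SR s t * P2L p t + P2R s t * SL p t -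
        4 * ((Qc s t)⁻¹ * (t - ((t.re : ℝ) : ℍ[ℝ])) * (Qc p t)⁻¹) =
      ((P2R s t - P2L p t) * p - star s * (P2R s t - P2L p t)) *
        (p ^ 2 - 2 * ((s.re : ℝ) : ℍ[ℝ]) * p + ((Quaternion.normSq s : ℝ) : ℍ[ℝ]))⁻¹ := by
  have hQ : Qc p s ≠ 0 := fun h => hsp (mem_qSphere_of_Qc_eq_zero h)
  rw [sub_re_self]
  change P2ResolventLhs s p t = _ * (Qc p s)⁻¹
  rw [eq_mul_inv_iff_mul_eq₀ hQ, Qc_eq]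
  have hsum : Commute (s + star s) (P2ResolventLhs s p t) := by
    rw [self_add_star']; exact coe_commute _ _
  have hprod : Commute (star s * s) (P2ResolventLhs s p t) := by
    rw [Quaternion.star_mul_self]; exact coe_commute _ _
  exact mul_sq_sub_mul_add_eq_of_mul_eq_mul_add (P2ResolventLhs_mul_self hs hp) hsum hprod
end

section
/- For quaternions s, p, t with s ∉ [p], assuming s and Q_{c,s}(t) commute and p and Q_{c,p}(t) commute (which holds in the scalar quaternionic case since Q_{c,s}(t) is a polynomial in s with real coefficients depending on t), the following holds: [ (Q_{c,s}(t)^{-1}(p - s) Q_{c,p}(t)^{-1}) p - s̄ (Q_{c,s}(t)^{-1}(p - s) Q_{c,p}(t)^{-1}) ] (p² - 2Re(s)p + |s|²)^{-1} = Q_{c,s}(t)^{-1} Q_{c,p}(t)^{-1}, provided Q_{c,s}(t) commutes with p and with the factor (p² - 2Re(s)p + |s|²). -/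
open scoped Quaternion

/-- `Q_s(p) = p² - 2 Re(s) p + |s|²`. -/
noncomputable def Qs (s p : ℍ[ℝ]) : ℍ[ℝ] :=
  p ^ 2 - 2 * ((s.re : ℝ) : ℍ[ℝ]) * p + ((Quaternion.normSq s : ℝ) : ℍ[ℝ])

/-! `Q_{c,s}(t) = Q_t(s)` and `Q_s(p)` are polynomials with real coefficients in `s` and `p`
respectively, so `Q_{c,p}(t)⁻¹` commutes with `p` and with `Q_s(p)`, and `s̄ = 2 Re(s) - s` commutes
with `Q_{c,s}(t)⁻¹`. Moving these factors, the bracket becomes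
`Q_{c,s}(t)⁻¹ ((p - s) p - s̄ (p - s)) Q_{c,p}(t)⁻¹`, and the middle factor is `Q_s(p)` because
`s + s̄ = 2 Re(s)` and `s̄ s = |s|²`. Finally `Q_s(p) ≠ 0`: its real part is
`(Re p - Re s)² + |Im s|² - |Im p|²` and its imaginary part `2 (Re p - Re s) Im p`, which vanish
together exactly when `s ∈ [p]`. -/

open Quaternion

theorem Qs_eq_coe_real (s p : ℍ[ℝ]) :
    Qs s p = p ^ 2 - ((2 * s.re : ℝ) : ℍ[ℝ]) * p + ((normSq s : ℝ) : ℍ[ℝ]) := by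
  rw [Qs]
  push_cast
  rfl

theorem re_Qs (s p : ℍ[ℝ]) :
    (Qs s p).re = (p.re - s.re) ^ 2 + normSq s.im - normSq p.im := by
  simp only [Qs_eq_coe_real, sq, coe_mul, normSq_def', re_add, re_sub, re_mul, re_coe, imI_coe,
    imJ_coe, imK_coe, imI_mul, imJ_mul, imK_mul, re_im, imI_im, imJ_im, imK_im, mul_zero, sub_zero,
    zero_mul, add_zero, zero_add, sub_self]
  ring

theorem im_Qs (s p : ℍ[ℝ]) : (Qs s p).im = (2 * (p.re - s.re)) • p.im := by
  ext <;>
    simp only [Qs_eq_coe_real, sq, coe_mul, im_add, im_sub, im_coe, re_sub, re_smul, re_mul, re_coe,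
      re_im, imI_sub, imJ_sub, imK_sub, imI_im, imJ_im, imK_im, imI_mul, imJ_mul, imK_mul, imI_coe,
      imJ_coe, imK_coe, imI_smul, imJ_smul, imK_smul, smul_eq_mul, mul_zero, zero_mul, add_zero,
      sub_zero, sub_self] <;>
    ring

theorem mem_qSphere_iff {s p : ℍ[ℝ]} :
    s ∈ qSphere p ↔ s.re = p.re ∧ normSq s.im = normSq p.im := by
  simp only [qSphere, Set.mem_ofPred_eq, normSq_eq_norm_mul_self,
    mul_self_inj (norm_nonneg _) (norm_nonneg _)]

theorem Qs_eq_zero_iff {s p : ℍ[ℝ]} : Qs s p = 0 ↔ s ∈ qSphere p := by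
  rw [mem_qSphere_iff]
  constructor
  · intro h
    have hre : (p.re - s.re) ^ 2 + normSq s.im - normSq p.im = 0 := by rw [← re_Qs, h, re_zero]
    have him : (2 * (p.re - s.re)) • p.im = 0 := by rw [← im_Qs, h, im_zero]
    have hsre : s.re = p.re := by
      rcases smul_eq_zero.mp him with hsub | hpim
      · linarith
      · rw [hpim, map_zero] at hre
        nlinarith [normSq_nonneg (a := s.im)]
    exact ⟨hsre, by rw [hsre] at hre; linarith⟩
  · rintro ⟨hsre, hnorm⟩
    rw [← re_add_im (Qs s p), re_Qs, im_Qs, hsre, hnorm]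
    simp

theorem commute_Qs_of_commute {s p a : ℍ[ℝ]} (h : Commute p a) : Commute (Qs s p) a :=
  ((h.pow_left 2).sub_left
    (((Commute.ofNat_left 2 a).mul_left (coe_commute _ a)).mul_left h)).add_left (coe_commute _ a)

theorem commute_Qc_self (s t : ℍ[ℝ]) : Commute s (Qc s t) :=
  (commute_Qs_of_commute (s := t) (Commute.refl s)).symm

theorem sub_mul_sub_star_mul_sub (s p : ℍ[ℝ]) : (p - s) * p - star s * (p - s) = Qs s p := by
  have expand : (p - s) * p - star s * (p - s) = p ^ 2 - (s + star s) * p + star s * s := by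
    noncomm_ring
  rw [expand, self_add_star, star_mul_self, Qs]

theorem step_VIII_s1_general (t s p : ℍ[ℝ]) (hsp : s ∉ qSphere p) :
    ((Qc s t)⁻¹ * (p - s) * (Qc p t)⁻¹ * p -
        star s * ((Qc s t)⁻¹ * (p - s) * (Qc p t)⁻¹)) * (Qs s p)⁻¹ =
      (Qc s t)⁻¹ * (Qc p t)⁻¹ := by
  have hp : Commute p (Qc p t)⁻¹ := (commute_Qc_self p t).inv_right₀
  have hs : Commute (star s) (Qc s t)⁻¹ := by
    rw [star_eq_two_re_sub]
    exact ((coe_commute _ _).sub_left (commute_Qc_self s t)).inv_right₀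
  have hQ : Commute (Qs s p) (Qc p t)⁻¹ := (commute_Qs_of_commute (commute_Qc_self p t)).inv_right₀
  calc ((Qc s t)⁻¹ * (p - s) * (Qc p t)⁻¹ * p -
        star s * ((Qc s t)⁻¹ * (p - s) * (Qc p t)⁻¹)) * (Qs s p)⁻¹
      = (Qc s t)⁻¹ * ((p - s) * p - star s * (p - s)) * (Qc p t)⁻¹ * (Qs s p)⁻¹ := by
        rw [mul_assoc _ _ p, ← hp.eq, ← mul_assoc (star s), ← mul_assoc (star s), hs.eq]
        noncomm_ring
    _ = (Qc s t)⁻¹ * (Qc p t)⁻¹ * (Qs s p * (Qs s p)⁻¹) := by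
        rw [sub_mul_sub_star_mul_sub, mul_assoc _ (Qs s p), hQ.eq]
        noncomm_ring
    _ = (Qc s t)⁻¹ * (Qc p t)⁻¹ := by
        rw [mul_inv_cancel₀ (mt Qs_eq_zero_iff.mp hsp), mul_one]

/-- Step VIII of the resolvent-equation proof: for `s ∉ [p]`, with `Q_{c,s}(t)` and
`Q_{c,p}(t)` nonzero, assuming `s` commutes with `Q_{c,s}(t)` and `p` commutes with
`Q_{c,p}(t)`, and that `Q_{c,s}(t)` commutes with `p` and with `Q_s(p)`, one has
`[(Q_{c,s}(t)^{-1}(p - s) Q_{c,p}(t)^{-1}) p - s̄ (Q_{c,s}(t)^{-1}(p - s) Q_{c,p}(t)^{-1})]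
 Q_s(p)^{-1} = Q_{c,s}(t)^{-1} Q_{c,p}(t)^{-1}`. -/
theorem step_VIII_s1 (t s p : ℍ[ℝ]) (hsp : s ∉ qSphere p)
    (hs : Qc s t ≠ 0) (hp : Qc p t ≠ 0)
    (hcomm1 : s * Qc s t = Qc s t * s)
    (hcomm2 : p * Qc p t = Qc p t * p)
    (hcomm3 : Qc s t * p = p * Qc s t)
    (hcomm4 : Qc s t * Qs s p = Qs s p * Qc s t) :
    ((Qc s t)⁻¹ * (p - s) * (Qc p t)⁻¹ * p -
        star s * ((Qc s t)⁻¹ * (p - s) * (Qc p t)⁻¹)) * (Qs s p)⁻¹ =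
      (Qc s t)⁻¹ * (Qc p t)⁻¹ :=
  step_VIII_s1_general t s p hsp
end
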